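/- Let Td ∈ ℝ^{n×n} be a symmetric tridiagonal matrix all of whose entries on the first subdiagonal (equivalently, on the first superdiagonal) are nonzero. Let J ∈ ℝ^{n×n} be a signature matrix whose last diagonal entry (in position (n,n)) is +1, and let p ∈ ℝ[x] be a polynomial with no multiple root such that p(x) = det(J)·det(x·J − Td). Then the number of real roots of p is greater than or equal to sgn(J). -/
import Mathlib

open Polynomial Matrix BigOperators Finset

section Aux
variable {m : ℕ}

lemma aux_dot_sum {ι : Type*} [Fintype ι] (z : Fin m → ℂ) (c : ι → ℂ) (w : ι → Fin m → ℂ) :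
    z ⬝ᵥ (∑ a, c a • w a) = ∑ a, c a * (z ⬝ᵥ w a) := by
  simp only [dotProduct, Finset.sum_apply, Pi.smul_apply, smul_eq_mul, Finset.mul_sum]
  rw [Finset.sum_comm]
  exact Finset.sum_congr rfl fun a _ => Finset.sum_congr rfl fun k _ => by ring

lemma aux_sum_dot {ι : Type*} [Fintype ι] (z : Fin m → ℂ) (c : ι → ℂ) (w : ι → Fin m → ℂ) :
    (∑ a, c a • w a) ⬝ᵥ z = ∑ a, c a * (w a ⬝ᵥ z) := by
  simp only [dotProduct, Finset.sum_apply, Pi.smul_apply, smul_eq_mul, Finset.sum_mul,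
    Finset.mul_sum]
  rw [Finset.sum_comm]
  exact Finset.sum_congr rfl fun a _ => Finset.sum_congr rfl fun k _ => by ring

lemma aux_mulVec_sum {ι : Type*} [Fintype ι] (M : Matrix (Fin m) (Fin m) ℂ) (c : ι → ℂ)
    (w : ι → Fin m → ℂ) : M *ᵥ (∑ a, c a • w a) = ∑ a, c a • (M *ᵥ w a) := by
  have : M *ᵥ (∑ a, c a • w a) = M.mulVecLin (∑ a, c a • w a) := rfl
  rw [this, map_sum]
  exact Finset.sum_congr rfl fun a _ => by rw [_root_.map_smul]; rfl

lemma aux_eval_charpoly (A : Matrix (Fin m) (Fin m) ℂ) (t : ℂ) :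
    A.charpoly.eval t = (t • (1 : Matrix (Fin m) (Fin m) ℂ) - A).det := by
  have h2 : (charmatrix A).map (Polynomial.evalRingHom t) =
      t • (1 : Matrix (Fin m) (Fin m) ℂ) - A := by
    ext i j
    by_cases hij : i = j
    · subst hij
      simp [charmatrix_apply_eq, Matrix.one_apply]
    · simp [charmatrix_apply_ne _ _ _ hij, Matrix.one_apply, hij]
  calc A.charpoly.eval t = (Polynomial.evalRingHom t) (charmatrix A).det := rfl
    _ = ((charmatrix A).map (Polynomial.evalRingHom t)).det := RingHom.map_det _ _
    _ = _ := by rw [h2]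

lemma aux_key_charpoly (v : Fin m → ℝ) (hv2 : ∀ i, v i * v i = 1)
    (Td : Matrix (Fin m) (Fin m) ℝ) :
    Polynomial.C (Matrix.diagonal v).det *
        ((Polynomial.X : Polynomial ℝ) •
            (Matrix.diagonal v).map (Polynomial.C : ℝ →+* Polynomial ℝ)
          - Td.map (Polynomial.C : ℝ →+* Polynomial ℝ)).det
      = (Matrix.diagonal v * Td).charpoly := by
  set J := Matrix.diagonal v with hJ
  have hJJ : J * J = 1 := by
    rw [hJ, Matrix.diagonal_mul_diagonal]
    simp only [hv2]
    exact Matrix.diagonal_one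
  have hmul : (J.map (C : ℝ →+* ℝ[X])) * charmatrix (J * Td)
      = (X : ℝ[X]) • J.map (C : ℝ →+* ℝ[X]) - Td.map (C : ℝ →+* ℝ[X]) := by
    rw [charmatrix, Matrix.mul_sub]
    congr 1
    · ext i j
      rw [Matrix.scalar_apply, Matrix.mul_diagonal, Matrix.smul_apply, smul_eq_mul, mul_comm]
    · rw [RingHom.mapMatrix_apply, ← Matrix.map_mul, ← Matrix.mul_assoc, hJJ, Matrix.one_mul]
  have hdet := congrArg Matrix.det hmul
  rw [Matrix.det_mul] at hdet
  have hdJ : (J.map (C : ℝ →+* ℝ[X])).det = Polynomial.C J.det := by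
    rw [← RingHom.mapMatrix_apply]; exact (RingHom.map_det _ _).symm
  have hdet1 : J.det * J.det = 1 := by rw [← Matrix.det_mul, hJJ, Matrix.det_one]
  calc Polynomial.C J.det * ((X : ℝ[X]) • J.map (C : ℝ →+* ℝ[X]) - Td.map (C : ℝ →+* ℝ[X])).det
      = Polynomial.C J.det * ((J.map (C : ℝ →+* ℝ[X])).det * (charmatrix (J * Td)).det) := by
        rw [hdet]
    _ = (Polynomial.C J.det * Polynomial.C J.det) * (J * Td).charpoly := by
        rw [hdJ, Matrix.charpoly]; ring
    _ = (J * Td).charpoly := by rw [← C_mul, hdet1, C_1, one_mul]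

end Aux


/-- Let `Td ∈ ℝ^{n×n}` be a symmetric tridiagonal matrix with all entries on the first
subdiagonal nonzero, let `J = diagonal v` be a signature matrix whose last diagonal
entry is `+1`, and let `p` be a polynomial with no multiple root such that
`p(x) = det(J)·det(x·J − Td)`.  Then the number of real roots of `p` is at least
`sgn(J) = Σ_i v_i`. -/
theorem stmt_17 (n : ℕ) (hn : 1 ≤ n) (Td : Matrix (Fin n) (Fin n) ℝ)
    (hsymm : Td.IsSymm)
    (htri : ∀ i j : Fin n, ((i : ℕ) + 2 ≤ (j : ℕ) ∨ (j : ℕ) + 2 ≤ (i : ℕ)) → Td i j = 0)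
    (hsub : ∀ i j : Fin n, (i : ℕ) = (j : ℕ) + 1 → Td i j ≠ 0)
    (v : Fin n → ℝ) (hv : ∀ i, v i = 1 ∨ v i = -1)
    (hlast : v ⟨n - 1, by omega⟩ = 1)
    (p : Polynomial ℝ) (hsf : Squarefree p)
    (hp : p = Polynomial.C (Matrix.diagonal v).det *
        ((Polynomial.X : Polynomial ℝ) •
            (Matrix.diagonal v).map (Polynomial.C : ℝ →+* Polynomial ℝ)
          - Td.map (Polynomial.C : ℝ →+* Polynomial ℝ)).det) :
    ∑ i : Fin n, v i ≤ (p.roots.toFinset.card : ℝ) := by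
  classical
  have hp0 : p ≠ 0 := hsf.ne_zero
  have hvsqR : ∀ i, v i * v i = 1 := fun i => by rcases hv i with h | h <;> rw [h] <;> norm_num
  have hpch : p = (Matrix.diagonal v * Td).charpoly := by
    rw [hp, aux_key_charpoly v hvsqR Td]
  set q : Polynomial ℂ := p.map (algebraMap ℝ ℂ) with hqdef
  have hq0 : q ≠ 0 := Polynomial.map_ne_zero hp0
  set Jc : Matrix (Fin n) (Fin n) ℂ := (Matrix.diagonal v).map (algebraMap ℝ ℂ) with hJcdef
  set Tc : Matrix (Fin n) (Fin n) ℂ := Td.map (algebraMap ℝ ℂ) with hTcdef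
  set A : Matrix (Fin n) (Fin n) ℂ := Jc * Tc with hAdef
  have hA : (Matrix.diagonal v * Td).map (algebraMap ℝ ℂ) = A := Matrix.map_mul
  have hq : q = A.charpoly := by
    rw [← hA, Matrix.charpoly_map, hqdef, hpch]
  have hdeg : q.natDegree = n := by
    rw [hq, Matrix.charpoly_natDegree_eq_dim, Fintype.card_fin]
  have hJcd : Jc = Matrix.diagonal (fun i => (v i : ℂ)) := by
    rw [hJcdef, Matrix.diagonal_map (map_zero (algebraMap ℝ ℂ))]
    rfl
  have hvsq : ∀ i, (v i : ℂ) * (v i : ℂ) = 1 := by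
    intro i; rcases hv i with h | h <;> rw [h] <;> norm_num
  have hJJ : Jc * Jc = 1 := by
    rw [hJcd, Matrix.diagonal_mul_diagonal]
    simp only [hvsq]
    exact Matrix.diagonal_one
  have hTcH : Tc.conjTranspose = Tc := by
    ext i j
    have hs : Td j i = Td i j := congrFun (congrFun hsymm i) j
    simp [hTcdef, Matrix.conjTranspose_apply, Matrix.map_apply, Complex.conj_ofReal, hs]
  have hJcH : Jc.conjTranspose = Jc := by
    rw [hJcd]
    ext i j
    rcases eq_or_ne i j with h | h
    · subst h; simp [Matrix.conjTranspose_apply, Complex.conj_ofReal]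
    · simp [Matrix.conjTranspose_apply, Matrix.diagonal_apply_ne _ h,
        Matrix.diagonal_apply_ne _ (Ne.symm h)]
  have hAJ : A.conjTranspose * Jc = Jc * A := by
    rw [hAdef, Matrix.conjTranspose_mul, hTcH, hJcH, Matrix.mul_assoc, hJJ, Matrix.mul_one,
      ← Matrix.mul_assoc, hJJ, Matrix.one_mul]
  have hcb : ((q.roots.toFinset.filter (fun z => 0 < z.im)).card
      ≤ (Finset.univ.filter (fun i => v i = -1)).card) := by
    set R : Finset ℂ := q.roots.toFinset with hRdef
    set Rup : Finset ℂ := R.filter (fun z => 0 < z.im) with hRupdef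
    -- the indefinite inner product
    set B : (Fin n → ℂ) → (Fin n → ℂ) → ℂ := fun x y => star y ⬝ᵥ (Jc *ᵥ x) with hBdef
    have hBA : ∀ x y, B (A *ᵥ x) y = B x (A *ᵥ y) := by
      intro x y
      show star y ⬝ᵥ (Jc *ᵥ (A *ᵥ x)) = star (A *ᵥ y) ⬝ᵥ (Jc *ᵥ x)
      rw [Matrix.star_mulVec, ← Matrix.dotProduct_mulVec, Matrix.mulVec_mulVec,
        Matrix.mulVec_mulVec, hAJ]
    have hBsl : ∀ (c : ℂ) x y, B (c • x) y = c * B x y := by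
      intro c x y
      show star y ⬝ᵥ (Jc *ᵥ (c • x)) = c * (star y ⬝ᵥ (Jc *ᵥ x))
      rw [Matrix.mulVec_smul, dotProduct_smul, smul_eq_mul]
    have hBsr : ∀ (c : ℂ) x y, B x (c • y) = (starRingEnd ℂ) c * B x y := by
      intro c x y
      show star (c • y) ⬝ᵥ (Jc *ᵥ x) = _
      rw [star_smul, smul_dotProduct]
      rfl
    -- eigenvectors
    have hex : ∀ z : ℂ, z ∈ R → ∃ x, x ≠ 0 ∧ A *ᵥ x = z • x := by
      intro z hz
      have hroot : q.IsRoot z := (Polynomial.mem_roots hq0).mp (Multiset.mem_toFinset.mp hz)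
      have hdet : (z • (1 : Matrix (Fin n) (Fin n) ℂ) - A).det = 0 := by
        rw [← aux_eval_charpoly, ← hq]; exact hroot
      obtain ⟨x, hx0, hx⟩ := Matrix.exists_mulVec_eq_zero_iff.mpr hdet
      refine ⟨x, hx0, ?_⟩
      rw [Matrix.sub_mulVec, Matrix.smul_mulVec, Matrix.one_mulVec, sub_eq_zero] at hx
      exact hx.symm
    choose xs hxs0 hxs using fun a : ↥Rup => hex a.1 (Finset.mem_filter.mp a.2).1
    have hLI : LinearIndependent ℂ xs :=
      Module.End.eigenvectors_linearIndependent' (Matrix.mulVecLin A) (fun a : ↥Rup => (a.1 : ℂ))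
        Subtype.val_injective xs
        (fun a => ⟨Module.End.mem_eigenspace_iff.mpr (by simpa [Matrix.mulVecLin_apply] using hxs a),
          hxs0 a⟩)
    -- orthogonality
    have hBorth : ∀ a b : ↥Rup, B (xs a) (xs b) = 0 := by
      intro a b
      have h3 := hBA (xs a) (xs b)
      rw [hxs a, hxs b, hBsl, hBsr] at h3
      have hne : (a.1 : ℂ) - (starRingEnd ℂ) b.1 ≠ 0 := by
        rw [sub_ne_zero]
        intro hc
        have ha : 0 < a.1.im := (Finset.mem_filter.mp a.2).2
        have hb : 0 < b.1.im := (Finset.mem_filter.mp b.2).2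
        have : a.1.im = -b.1.im := by rw [hc]; simp [Complex.conj_im]
        linarith [this ▸ ha]
      have : ((a.1 : ℂ) - (starRingEnd ℂ) b.1) * B (xs a) (xs b) = 0 := by
        rw [sub_mul, h3]; ring
      exact (mul_eq_zero.mp this).resolve_left hne
    -- projections to negative coordinates are linearly independent
    have hLI2 : LinearIndependent ℂ
        (fun a : ↥Rup => fun j : {i : Fin n // v i = -1} => xs a j.1) := by
      rw [Fintype.linearIndependent_iff]
      intro g hg
      set x : Fin n → ℂ := ∑ a, g a • xs a with hxdef
      have hneg : ∀ i, (hi : v i = -1) → x i = 0 := by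
        intro i hi
        have := congrFun hg ⟨i, hi⟩
        simpa [hxdef, Finset.sum_apply] using this
      have hBxx : B x x = 0 := by
        show star x ⬝ᵥ (Jc *ᵥ x) = 0
        rw [hxdef, aux_mulVec_sum, aux_dot_sum]
        refine Finset.sum_eq_zero fun b _ => ?_
        have : star (∑ a, g a • xs a) ⬝ᵥ (Jc *ᵥ xs b) = ∑ a, (starRingEnd ℂ) (g a) * B (xs b) (xs a) := by
          have hstar : star (∑ a : ↥Rup, g a • xs a)
              = ∑ a : ↥Rup, (starRingEnd ℂ) (g a) • star (xs a) := by
            rw [star_sum]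
            exact Finset.sum_congr rfl fun a _ => by rw [star_smul]; rfl
          rw [hstar, aux_sum_dot]
        rw [this]
        rw [Finset.sum_eq_zero fun a _ => by rw [hBorth b a, mul_zero]]
        ring
      have hx0 : x = 0 := by
        have hmv : ∀ i, (Jc *ᵥ x) i = (v i : ℂ) * x i := by
          intro i; rw [hJcd, Matrix.mulVec_diagonal]
        have hterm : ∀ i, (starRingEnd ℂ) (x i) * ((v i : ℂ) * x i)
            = ((Complex.normSq (x i) : ℝ) : ℂ) := by
          intro i
          rcases hv i with h | h
          · rw [h]
            push_cast
            rw [one_mul, mul_comm, Complex.mul_conj]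
          · rw [hneg i h]
            simp
        have hsum : ∑ i, ((Complex.normSq (x i) : ℝ) : ℂ) = 0 := by
          rw [← hBxx]
          show _ = star x ⬝ᵥ (Jc *ᵥ x)
          rw [dotProduct]
          exact Finset.sum_congr rfl fun i _ => by
            rw [hmv i, Pi.star_apply]
            exact (hterm i).symm
        have hsum' : ∑ i, Complex.normSq (x i) = 0 := by
          have := hsum
          push_cast at this
          exact_mod_cast this
        funext i
        have hnn : ∀ j ∈ Finset.univ, (0:ℝ) ≤ Complex.normSq (x j) :=
          fun j _ => Complex.normSq_nonneg _
        have := (Finset.sum_eq_zero_iff_of_nonneg hnn).mp hsum' i (Finset.mem_univ i)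
        exact Complex.normSq_eq_zero.mp this
      intro a
      exact Fintype.linearIndependent_iff.mp hLI g (by rw [← hxdef]; exact hx0) a
    -- card bound
    have hcard := hLI2.fintype_card_le_finrank
    rw [Module.finrank_fintype_fun_eq_card] at hcard
    simpa [Fintype.card_coe, Fintype.card_subtype] using hcard
  set R : Finset ℂ := q.roots.toFinset with hRdef
  have hsep : p.Separable := PerfectField.separable_iff_squarefree.mpr hsf
  have hqsep : q.Separable := hqdef ▸ hsep.map
  have hnodup : q.roots.Nodup := Polynomial.nodup_roots hqsep
  have hcardroots : q.roots.card = n := by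
    rw [← hdeg]
    exact Polynomial.splits_iff_card_roots.mp (IsAlgClosed.splits q)
  have hR : R.card = n := by
    rw [hRdef, Multiset.toFinset_card_of_nodup hnodup, hcardroots]
  -- conjugation stability
  have hqc : q.map (starRingEnd ℂ) = q := by
    rw [hqdef, Polynomial.map_map]
    congr 1
    exact RingHom.ext fun r => by simp [Complex.conj_ofReal]
  have hconjroot : ∀ z, z ∈ R → (starRingEnd ℂ) z ∈ R := by
    intro z hz
    have hroot := (Polynomial.mem_roots hq0).mp (Multiset.mem_toFinset.mp hz)
    rw [hRdef, Multiset.mem_toFinset, Polynomial.mem_roots hq0]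
    show q.eval ((starRingEnd ℂ) z) = 0
    have : q.eval ((starRingEnd ℂ) z) = (starRingEnd ℂ) (q.eval z) := by
      conv_lhs => rw [← hqc]
      rw [Polynomial.eval_map]
      exact Polynomial.eval₂_at_apply (starRingEnd ℂ) z
    rw [this, hroot, map_zero]
  have hupdown : (R.filter fun z => 0 < z.im).card = (R.filter fun z => z.im < 0).card := by
    apply Finset.card_bij' (fun z _ => (starRingEnd ℂ) z) (fun z _ => (starRingEnd ℂ) z)
    · intro a ha
      rw [Finset.mem_filter] at ha ⊢
      exact ⟨hconjroot _ ha.1, by simpa using ha.2⟩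
    · intro a ha
      rw [Finset.mem_filter] at ha ⊢
      refine ⟨hconjroot _ ha.1, by simpa using ha.2⟩
    · intro a _; simp
    · intro a _; simp
  have hsplit : (R.filter fun z => z.im = 0).card + ((R.filter fun z => 0 < z.im).card
      + (R.filter fun z => z.im < 0).card) = n := by
    rw [← hR]
    have h2 : R.filter (fun z => ¬ z.im = 0)
        = (R.filter fun z => 0 < z.im) ∪ (R.filter fun z => z.im < 0) := by
      ext z
      simp only [Finset.mem_filter, Finset.mem_union]
      constructor
      · rintro ⟨hz, hne⟩
        rcases lt_or_gt_of_ne hne with h | h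
        · exact Or.inr ⟨hz, h⟩
        · exact Or.inl ⟨hz, h⟩
      · rintro (⟨hz, h⟩ | ⟨hz, h⟩)
        · exact ⟨hz, by positivity⟩
        · exact ⟨hz, ne_of_lt h⟩
    have hdisj : Disjoint (R.filter fun z => 0 < z.im) (R.filter fun z => z.im < 0) := by
      rw [Finset.disjoint_left]
      intro z h1 h2
      rw [Finset.mem_filter] at h1 h2
      linarith [h1.2, h2.2]
    have h1 := Finset.card_filter_add_card_filter_not (s := R) (p := fun z => z.im = 0)
    rw [h2, Finset.card_union_of_disjoint hdisj] at h1
    exact h1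
  -- real roots
  have himg : p.roots.toFinset.image (fun r => ((r : ℝ) : ℂ)) = R.filter (fun z => z.im = 0) := by
    ext z
    simp only [Finset.mem_image, Multiset.mem_toFinset, Finset.mem_filter]
    constructor
    · rintro ⟨r, hr, rfl⟩
      have hr' : p.eval r = 0 := (Polynomial.mem_roots hp0).mp hr
      refine ⟨?_, by simp⟩
      rw [hRdef, Multiset.mem_toFinset, Polynomial.mem_roots hq0]
      show q.eval _ = 0
      rw [hqdef, Polynomial.eval_map, show ((r : ℝ) : ℂ) = algebraMap ℝ ℂ r from rfl,
        Polynomial.eval₂_at_apply, hr', map_zero]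
    · rintro ⟨hz, him⟩
      have hzeq : ((z.re : ℝ) : ℂ) = z := Complex.ext rfl (by simp [him])
      refine ⟨z.re, ?_, hzeq⟩
      rw [Polynomial.mem_roots hp0]
      show p.eval z.re = 0
      have hq' : q.eval z = 0 := (Polynomial.mem_roots hq0).mp (Multiset.mem_toFinset.mp hz)
      have : (algebraMap ℝ ℂ) (p.eval z.re) = 0 := by
        rw [← Polynomial.eval₂_at_apply, ← Polynomial.eval_map, ← hqdef,
          show (algebraMap ℝ ℂ) z.re = z from hzeq]
        exact hq'
      rw [show (algebraMap ℝ ℂ) (p.eval z.re) = ((p.eval z.re : ℝ) : ℂ) from rfl,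
        Complex.ofReal_eq_zero] at this
      exact this
  have hre : p.roots.toFinset.card = (R.filter fun z => z.im = 0).card := by
    rw [← himg, Finset.card_image_of_injective _ (fun a b h => by exact_mod_cast h)]
  -- sum of v
  have h2' : (univ.filter fun i : Fin n => ¬ v i = 1) = univ.filter fun i => v i = -1 := by
    ext i
    simp only [mem_filter, mem_univ, true_and]
    constructor
    · intro h
      rcases hv i with h1 | h1
      · exact absurd h1 h
      · exact h1
    · intro h
      rw [h]; norm_num
  have hcards : (univ.filter fun i : Fin n => v i = 1).card
      + (univ.filter fun i => v i = -1).card = n := by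
    rw [← h2', Finset.card_filter_add_card_filter_not, Finset.card_univ, Fintype.card_fin]
  have hsumv : ∑ i, v i = ((univ.filter fun i : Fin n => v i = 1).card : ℝ)
      - ((univ.filter fun i => v i = -1).card : ℝ) := by
    rw [← Finset.sum_filter_add_sum_filter_not univ (fun i => v i = 1), h2']
    have e1 : ∑ i ∈ univ.filter (fun i : Fin n => v i = 1), v i
        = ((univ.filter fun i : Fin n => v i = 1).card : ℝ) := by
      rw [Finset.sum_congr rfl (fun i hi => (Finset.mem_filter.mp hi).2)]
      simp
    have e2 : ∑ i ∈ univ.filter (fun i : Fin n => v i = -1), v i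
        = -((univ.filter fun i : Fin n => v i = -1).card : ℝ) := by
      rw [Finset.sum_congr rfl (fun i hi => (Finset.mem_filter.mp hi).2)]
      simp [mul_comm]
    rw [e1, e2]
    ring
  -- final arithmetic
  have c1 : ((R.filter fun z => z.im = 0).card : ℝ) + ((R.filter fun z => 0 < z.im).card
      + (R.filter fun z => z.im < 0).card) = n := by exact_mod_cast hsplit
  have c2 : ((R.filter fun z => 0 < z.im).card : ℝ) = (R.filter fun z => z.im < 0).card := by
    exact_mod_cast hupdown
  have c3 : ((R.filter fun z => 0 < z.im).card : ℝ)
      ≤ ((univ.filter fun i : Fin n => v i = -1).card : ℝ) := by exact_mod_cast hcb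
  have c4 : ((univ.filter fun i : Fin n => v i = 1).card : ℝ)
      + ((univ.filter fun i : Fin n => v i = -1).card : ℝ) = n := by exact_mod_cast hcards
  have c5 : (p.roots.toFinset.card : ℝ) = ((R.filter fun z => z.im = 0).card : ℝ) := by
    exact_mod_cast hre
  rw [hsumv, c5]
  linarith
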